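/- arXiv:1112.4296 — 7 statements merged into one kernel-verified Lean document; each statement's English description precedes it below -/
import Mathlib

section
/- If H is an n×n matrix with entries in {1,-1} satisfying H·Hᵀ = n·I and n ≥ 3, then 4 divides n. -/
/-!
If `u`, `v`, `w` are pairwise orthogonal vectors with odd entries, then
`(u + v) ⬝ᵥ (u + w) = u ⬝ᵥ u`, while every summand `(uᵢ + vᵢ) * (uᵢ + wᵢ)` is a product of two
even numbers, hence divisible by `4`. Applied to three distinct rows of a Hadamard matrix of
order `n`, this gives `4 ∣ n`.
-/

open Matrix

section CommRing

variable {R ι : Type*} [CommRing R] [Fintype ι]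

theorem four_dvd_add_mul_add_of_odd {x y z : R} (hx : Odd x) (hy : Odd y) (hz : Odd z) :
    4 ∣ (x + y) * (x + z) := by
  obtain ⟨r, hr⟩ := hx.add_odd hy
  obtain ⟨s, hs⟩ := hx.add_odd hz
  exact ⟨r * s, by rw [hr, hs]; ring⟩

theorem add_dotProduct_add_eq_dotProduct_self_of_orthogonal {u v w : ι → R}
    (huw : u ⬝ᵥ w = 0) (hvu : v ⬝ᵥ u = 0) (hvw : v ⬝ᵥ w = 0) :
    (u + v) ⬝ᵥ (u + w) = u ⬝ᵥ u := by
  simp only [add_dotProduct, dotProduct_add, huw, hvu, hvw, add_zero]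

theorem four_dvd_dotProduct_self_of_odd_of_orthogonal {u v w : ι → R}
    (hu : ∀ i, Odd (u i)) (hv : ∀ i, Odd (v i)) (hw : ∀ i, Odd (w i))
    (huw : u ⬝ᵥ w = 0) (hvu : v ⬝ᵥ u = 0) (hvw : v ⬝ᵥ w = 0) :
    4 ∣ u ⬝ᵥ u := by
  rw [← add_dotProduct_add_eq_dotProduct_self_of_orthogonal huw hvu hvw]
  exact Finset.dvd_sum fun i _ => four_dvd_add_mul_add_of_odd (hu i) (hv i) (hw i)

theorem dotProduct_rows_of_mul_transpose_eq_smul_one [DecidableEq ι] {H : Matrix ι ι R} {c : R}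
    (hH : H * Hᵀ = c • (1 : Matrix ι ι R)) (i j : ι) :
    H i ⬝ᵥ H j = if i = j then c else 0 := by
  have := congrFun (congrFun hH i) j
  rwa [mul_apply', Matrix.smul_apply, one_apply, smul_ite, smul_eq_mul, mul_one, smul_zero] at this

end CommRing

theorem hadamard_order_div_four (n : ℕ) (H : Matrix (Fin n) (Fin n) ℤ)
    (hent : ∀ i j, H i j = 1 ∨ H i j = -1)
    (hH : H * H.transpose = (n : ℤ) • (1 : Matrix (Fin n) (Fin n) ℤ))
    (hn : 3 ≤ n) : 4 ∣ n := by
  have hodd : ∀ i j, Odd (H i j) := fun i j => by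
    rcases hent i j with h | h <;> simp [h]
  have hrow := dotProduct_rows_of_mul_transpose_eq_smul_one hH
  let a : Fin n := ⟨0, by omega⟩
  let b : Fin n := ⟨1, by omega⟩
  let c : Fin n := ⟨2, by omega⟩
  have h4 := four_dvd_dotProduct_self_of_odd_of_orthogonal (hodd a) (hodd b) (hodd c)
    (by simp [hrow, a, c]) (by simp [hrow, a, b]) (by simp [hrow, b, c])
  rw [hrow, if_pos rfl] at h4
  exact_mod_cast h4
end

section
/- For odd t and any triangular number T with 0 ≤ T ≤ (t²-1)/8, there exists an integer k with 0 ≤ k ≤ (t-1)/2 such that (t²-1)/8 - T = k(t-k)/2. -/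
/-! Write `t = 2s + 1` and `T = m(m+1)/2`. Then `(t² - 1)/8 = s(s+1)/2`, so `T` lies below it exactly
when `m ≤ s`, and `k = s - m` works because `s(s+1) - m(m+1) = (s - m)(s + m + 1) = k(t - k)`. -/

namespace Int

def triangle (n : ℤ) : ℤ := n * (n + 1) / 2

theorem two_mul_triangle (n : ℤ) : 2 * triangle n = n * (n + 1) := by
  obtain ⟨u, hu⟩ := Int.even_mul_succ_self n
  rw [triangle, hu]
  omega

theorem sq_two_mul_add_one_sub_one_div_eight (s : ℤ) :
    ((2 * s + 1) ^ 2 - 1) / 8 = triangle s := by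
  have h := two_mul_triangle s
  rw [show (2 * s + 1) ^ 2 - 1 = 8 * triangle s by linear_combination -4 * h]
  omega

theorem triangle_sub_triangle (s m : ℤ) :
    triangle s - triangle m = (s - m) * (s + m + 1) / 2 := by
  have hs := two_mul_triangle s
  have hm := two_mul_triangle m
  rw [show (s - m) * (s + m + 1) = 2 * (triangle s - triangle m) by linear_combination hm - hs]
  omega

theorem le_of_triangle_le {m s : ℤ} (hs : 0 ≤ s) (h : triangle m ≤ triangle s) : m ≤ s := by
  by_contra! hlt
  nlinarith [two_mul_triangle m, two_mul_triangle s]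

end Int

open Int in
theorem triangular_diff_realized_general (t T : ℤ) (ht : Odd t) (ht0 : 0 < t)
    (hT : ∃ m : ℤ, 0 ≤ m ∧ T = m * (m + 1) / 2)
    (hTle : T ≤ (t ^ 2 - 1) / 8) :
    ∃ k : ℤ, 0 ≤ k ∧ k ≤ (t - 1) / 2 ∧
      (t ^ 2 - 1) / 8 - T = k * (t - k) / 2 := by
  obtain ⟨m, hm0, rfl⟩ := hT
  obtain ⟨s, rfl⟩ := ht
  have hs0 : 0 ≤ s := by omega
  rw [sq_two_mul_add_one_sub_one_div_eight] at hTle ⊢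
  have hms : m ≤ s := le_of_triangle_le hs0 hTle
  refine ⟨s - m, by omega, by omega, ?_⟩
  rw [← triangle, triangle_sub_triangle]
  ring_nf

theorem triangular_diff_realized (t T : ℤ) (ht : Odd t) (ht0 : 0 < t)
    (hT : ∃ m : ℤ, 0 ≤ m ∧ T = m * (m + 1) / 2)
    (hT0 : 0 ≤ T) (hTle : T ≤ (t ^ 2 - 1) / 8) :
    ∃ k : ℤ, 0 ≤ k ∧ k ≤ (t - 1) / 2 ∧
      (t ^ 2 - 1) / 8 - T = k * (t - k) / 2 :=
  triangular_diff_realized_general t T ht ht0 hT hTle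
end

section
/- For every odd t ≥ 3 there exist integers 0 ≤ k₃ ≤ k₂ ≤ k₁ ≤ k₀ ≤ (t-1)/2 such that k₀(t-k₀)/2 + k₁(t-k₁)/2 + k₂(t-k₂)/2 + k₃(t-k₃)/2 = t(t-1)/2. -/
/-!
Write `t = 2m + 1`, `T n = n(n+1)/2` and `k = m - x`. Then `k(t - k)/2 = T m - T x`, so the
equation asks for `T x₀ + T x₁ + T x₂ + T x₃ = m`: four triangular numbers summing to `m`, and
`T x ≤ m` forces `0 ≤ k`. Instead of Gauss's theorem we use Lagrange's: if
`2m + 1 = a² + b² + c² + d²` then `a + b + c + d` is odd, and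
`4(2m + 1) = (a+b+c+d)² + (a+b-c-d)² + (a-b+c-d)² + (a-b-c+d)²` is a sum of four odd squares
`(2x + 1)² = 8 T x + 1`.
-/

theorem Int.odd_add_add_add_of_odd_sq_add_sq_add_sq_add_sq {a b c d : ℤ}
    (h : Odd (a ^ 2 + b ^ 2 + c ^ 2 + d ^ 2)) : Odd (a + b + c + d) := by
  simpa [Int.odd_add, parity_simps] using h

theorem Int.exists_odd_sq_add_sq_add_sq_add_sq_eq_four_mul {n : ℕ} (hn : Odd n) :
    ∃ a b c d : ℤ, Odd a ∧ Odd b ∧ Odd c ∧ Odd d ∧ a ^ 2 + b ^ 2 + c ^ 2 + d ^ 2 = 4 * n := by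
  obtain ⟨a, b, c, d, h⟩ := Nat.sum_four_squares n
  have h' : (a : ℤ) ^ 2 + b ^ 2 + c ^ 2 + d ^ 2 = n := by exact_mod_cast h
  have hodd : Odd ((a : ℤ) + b + c + d) :=
    Int.odd_add_add_add_of_odd_sq_add_sq_add_sq_add_sq (h' ▸ (Int.odd_coe_nat n).mpr hn)
  have flip (u v : ℤ) : Odd ((a : ℤ) + b + c + d - 2 * (u + v)) :=
    hodd.sub_even (even_two_mul _)
  refine ⟨a + b + c + d, a + b - c - d, a - b + c - d, a - b - c + d, hodd,
    by convert flip c d using 1; ring, by convert flip b d using 1; ring,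
    by convert flip b c using 1; ring, by linear_combination 4 * h'⟩

theorem Int.exists_sq_eq_two_mul_add_one_sq_of_odd {v : ℤ} (hv : Odd v) :
    ∃ x : ℕ, v ^ 2 = (2 * x + 1) ^ 2 := by
  obtain ⟨x, hx⟩ := Int.natAbs_odd.mpr hv
  exact ⟨x, by rw [← Int.natAbs_sq, hx]; push_cast; ring⟩

theorem Nat.exists_sum_four_triangular (m : ℕ) :
    ∃ x y z w : ℕ, x * (x + 1) / 2 + y * (y + 1) / 2 + z * (z + 1) / 2 + w * (w + 1) / 2 = m := by
  obtain ⟨a, b, c, d, ha, hb, hc, hd, h⟩ :=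
    Int.exists_odd_sq_add_sq_add_sq_add_sq_eq_four_mul (odd_two_mul_add_one m)
  obtain ⟨x, hx⟩ := Int.exists_sq_eq_two_mul_add_one_sq_of_odd ha
  obtain ⟨y, hy⟩ := Int.exists_sq_eq_two_mul_add_one_sq_of_odd hb
  obtain ⟨z, hz⟩ := Int.exists_sq_eq_two_mul_add_one_sq_of_odd hc
  obtain ⟨w, hw⟩ := Int.exists_sq_eq_two_mul_add_one_sq_of_odd hd
  have hsum : x * (x + 1) + y * (y + 1) + z * (z + 1) + w * (w + 1) = 2 * m := by
    rw [hx, hy, hz, hw] at h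
    push_cast at h
    exact_mod_cast (by linarith :
      (x : ℤ) * (x + 1) + y * (y + 1) + z * (z + 1) + w * (w + 1) = 2 * m)
  have := Nat.div_two_mul_two_of_even (Nat.even_mul_succ_self x)
  have := Nat.div_two_mul_two_of_even (Nat.even_mul_succ_self y)
  have := Nat.div_two_mul_two_of_even (Nat.even_mul_succ_self z)
  have := Nat.div_two_mul_two_of_even (Nat.even_mul_succ_self w)
  exact ⟨x, y, z, w, by omega⟩

theorem exists_le_le_le_add_add_add_eq {α β : Type*} [LinearOrder α] [AddCommMonoid β]
    (f : α → β) (a b c d : α) :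
    ∃ p q r s, p ≤ q ∧ q ≤ r ∧ r ≤ s ∧ f p + f q + f r + f s = f a + f b + f c + f d := by
  have sort_two (u v : α) : f (min u v) + f (max u v) = f u + f v := by
    rcases le_total u v with h | h <;> simp [h, add_comm]
  -- a sorting network: sort the pairs `(a, b)`, `(c, d)`, then the minima, the maxima, the middle two
  set a₁ := min a b; set b₁ := max a b; set c₁ := min c d; set d₁ := max c d
  have hab : a₁ ≤ b₁ := min_le_max
  have hcd : c₁ ≤ d₁ := min_le_max
  refine ⟨min a₁ c₁, min (max a₁ c₁) (min b₁ d₁), max (max a₁ c₁) (min b₁ d₁), max b₁ d₁,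
    le_min min_le_max (le_min (min_le_left _ _ |>.trans hab) (min_le_right _ _ |>.trans hcd)),
    min_le_max,
    max_le (max_le (hab.trans (le_max_left _ _)) (hcd.trans (le_max_right _ _))) (min_le_max), ?_⟩
  calc _ = f (min a₁ c₁) + (f (min (max a₁ c₁) (min b₁ d₁)) + f (max (max a₁ c₁) (min b₁ d₁)))
        + f (max b₁ d₁) := by simp only [add_assoc]
    _ = (f (min a₁ c₁) + f (max a₁ c₁)) + (f (min b₁ d₁) + f (max b₁ d₁)) := by
        rw [sort_two]; simp only [add_assoc]
    _ = (f a₁ + f b₁) + (f c₁ + f d₁) := by rw [sort_two, sort_two]; abel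
    _ = _ := by rw [sort_two, sort_two]; abel

theorem Int.sub_mul_two_mul_add_one_sub_ediv_two (m x : ℤ) :
    (m - x) * (2 * m + 1 - (m - x)) / 2 = m * (m + 1) / 2 - x * (x + 1) / 2 := by
  rw [← Int.sub_ediv_of_dvd _ (even_iff_two_dvd.mp (Int.even_mul_succ_self x))]
  congr 1
  ring

theorem distribution_exists (t : ℤ) (ht : Odd t) (ht3 : 3 ≤ t) :
    ∃ k₀ k₁ k₂ k₃ : ℤ, 0 ≤ k₃ ∧ k₃ ≤ k₂ ∧ k₂ ≤ k₁ ∧ k₁ ≤ k₀ ∧ k₀ ≤ (t - 1) / 2 ∧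
      k₀ * (t - k₀) / 2 + k₁ * (t - k₁) / 2 + k₂ * (t - k₂) / 2 + k₃ * (t - k₃) / 2 =
        t * (t - 1) / 2 := by
  obtain ⟨m, rfl⟩ := ht
  lift m to ℕ using by omega
  obtain ⟨x, y, z, w, hm⟩ := Nat.exists_sum_four_triangular m
  obtain ⟨x₀, x₁, x₂, x₃, h₀₁, h₁₂, h₂₃, hsum⟩ :=
    exists_le_le_le_add_add_add_eq (fun n : ℕ => n * (n + 1) / 2) x y z w
  rw [hm] at hsum
  have hx₃ : x₃ ≤ m := by
    have : x₃ * 2 ≤ x₃ * (x₃ + 1) := by nlinarith [sq_nonneg x₃]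
    omega
  refine ⟨m - x₀, m - x₁, m - x₂, m - x₃, by omega, by omega, by omega, by omega, by omega, ?_⟩
  have hsum' : (x₀ : ℤ) * (x₀ + 1) / 2 + x₁ * (x₁ + 1) / 2 + x₂ * (x₂ + 1) / 2
      + x₃ * (x₃ + 1) / 2 = m := by exact_mod_cast hsum
  have hT := Int.two_mul_ediv_two_of_even (Int.even_mul_succ_self (m : ℤ))
  simp only [Int.sub_mul_two_mul_add_one_sub_ediv_two]
  rw [show (2 * (m : ℤ) + 1) * (2 * m + 1 - 1) = 2 * ((2 * m + 1) * m) by ring,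
    Int.mul_ediv_cancel_left _ two_ne_zero]
  linear_combination 2 * hT - hsum'
end

section
/- For any odd positive integer t, tuples (k₀,k₁,k₂,k₃) with 0 ≤ kᵢ ≤ (t-1)/2 satisfying Σᵢ kᵢ(t-kᵢ)/2 = t(t-1)/2 are in bijection with decompositions of (t-1)/2 as an ordered sum of four triangular numbers t₀+t₁+t₂+t₃, via tᵢ = (t²-1)/8 - kᵢ(t-kᵢ)/2. -/
/-!
Write `T m = m (m + 1) / 2` and `t = 2u + 1`. Then `(t² - 1) / 8 = T u` and
`k (t - k) / 2 = T u - T (u - k)`, so `k ↦ u - k` turns the conditions on a distribution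
`(k₀, …, k₃)` into `0 ≤ mᵢ` and `∑ T mᵢ = u`; as `T` is strictly increasing on `m ≥ 0`,
`m ↦ (T mᵢ)ᵢ` is then a bijection onto the decompositions of `u` into four triangular numbers.
-/

open Finset

def triangular (m : ℤ) : ℤ := m * (m + 1) / 2

lemma two_mul_triangular (m : ℤ) : 2 * triangular m = m * (m + 1) :=
  Int.mul_ediv_cancel' (Int.even_mul_succ_self m).two_dvd

lemma le_triangular {m : ℤ} (hm : 0 ≤ m) : m ≤ triangular m := by
  rcases hm.eq_or_lt with rfl | hpos
  · rfl
  · nlinarith [two_mul_triangular m]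

lemma triangular_strictMonoOn : StrictMonoOn triangular (Set.Ici 0) := by
  intro a ha b _ hab
  nlinarith [two_mul_triangular a, two_mul_triangular b, Set.mem_Ici.mp ha]

lemma le_of_sum_triangular_eq {ι : Type*} [Fintype ι] {m : ι → ℤ} {n : ℤ}
    (hm : ∀ i, 0 ≤ m i) (hsum : ∑ i, triangular (m i) = n) (i : ι) : m i ≤ n :=
  calc m i ≤ triangular (m i) := le_triangular (hm i)
    _ ≤ ∑ j, triangular (m j) :=
      single_le_sum (fun j _ => (hm j).trans (le_triangular (hm j))) (mem_univ i)
    _ = n := hsum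

section Odd

variable {t : ℤ} (ht : Odd t)
include ht

lemma mul_sub_div_two_of_odd (k : ℤ) :
    k * (t - k) / 2 = triangular ((t - 1) / 2) - triangular ((t - 1) / 2 - k) := by
  obtain ⟨u, rfl⟩ := ht
  rw [show (2 * u + 1 - 1) / 2 = u by omega,
    show k * (2 * u + 1 - k) = 2 * (triangular u - triangular (u - k)) by
      linear_combination two_mul_triangular (u - k) - two_mul_triangular u,
    Int.mul_ediv_cancel_left _ two_ne_zero]

lemma sq_sub_one_div_eight_of_odd : (t ^ 2 - 1) / 8 = triangular ((t - 1) / 2) := by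
  obtain ⟨u, rfl⟩ := ht
  rw [show (2 * u + 1 - 1) / 2 = u by omega,
    show (2 * u + 1) ^ 2 - 1 = 8 * triangular u by
      linear_combination (-4) * two_mul_triangular u,
    Int.mul_ediv_cancel_left _ (by norm_num)]

lemma mul_sub_one_div_two_of_odd :
    t * (t - 1) / 2 = 4 * triangular ((t - 1) / 2) - (t - 1) / 2 := by
  obtain ⟨u, rfl⟩ := ht
  rw [show (2 * u + 1 - 1) / 2 = u by omega,
    show (2 * u + 1) * (2 * u + 1 - 1) = 2 * (4 * triangular u - u) by
      linear_combination (-4) * two_mul_triangular u,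
    Int.mul_ediv_cancel_left _ two_ne_zero]

def distributionEquiv :
    {k : Fin 4 → ℤ // (∀ i, 0 ≤ k i ∧ k i ≤ (t - 1) / 2) ∧
        (∑ i, k i * (t - k i) / 2) = t * (t - 1) / 2} ≃
      {m : Fin 4 → ℤ // (∀ i, 0 ≤ m i) ∧ ∑ i, triangular (m i) = (t - 1) / 2} :=
  Equiv.subtypeEquiv (Equiv.subLeft fun _ => (t - 1) / 2) fun k => by
    have hsum : ∑ i, k i * (t - k i) / 2 =
        4 * triangular ((t - 1) / 2) - ∑ i, triangular ((t - 1) / 2 - k i) := by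
      simp only [mul_sub_div_two_of_odd ht, sum_sub_distrib, sum_const, card_univ,
        Fintype.card_fin, nsmul_eq_mul, Nat.cast_ofNat]
    simp only [Equiv.subLeft_apply, Pi.sub_apply, hsum, mul_sub_one_div_two_of_odd ht,
      sub_nonneg, sub_right_inj]
    refine ⟨fun ⟨hk, hs⟩ => ⟨fun i => (hk i).2, hs⟩, fun ⟨hk, hs⟩ => ⟨fun i => ⟨?_, hk i⟩, hs⟩⟩
    have := le_of_sum_triangular_eq (fun j => sub_nonneg.mpr (hk j)) hs i
    linarith

end Odd

noncomputable def triangularEquiv (ι : Type*) [Fintype ι] (n : ℤ) :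
    {m : ι → ℤ // (∀ i, 0 ≤ m i) ∧ ∑ i, triangular (m i) = n} ≃
      {s : ι → ℤ // (∀ i, ∃ m : ℤ, 0 ≤ m ∧ s i = triangular m) ∧ ∑ i, s i = n} :=
  Equiv.ofBijective (fun m => ⟨fun i => triangular (m.1 i), fun i => ⟨m.1 i, m.2.1 i, rfl⟩, m.2.2⟩)
    ⟨fun m m' h => Subtype.ext <| funext fun i =>
      triangular_strictMonoOn.injOn (m.2.1 i) (m'.2.1 i) (congrFun (congrArg Subtype.val h) i),
    fun s => by
      choose m hm hs using s.2.1
      refine ⟨⟨m, hm, ?_⟩, Subtype.ext <| funext fun i => (hs i).symm⟩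
      simpa only [← hs] using s.2.2⟩

theorem distributions_equiv_triangular_decompositions_general (t : ℤ) (ht : Odd t) :
    ∃ e : {k : Fin 4 → ℤ // (∀ i, 0 ≤ k i ∧ k i ≤ (t - 1) / 2) ∧
            (∑ i, k i * (t - k i) / 2) = t * (t - 1) / 2} ≃
          {s : Fin 4 → ℤ // (∀ i, ∃ m : ℤ, 0 ≤ m ∧ s i = m * (m + 1) / 2) ∧
            (∑ i, s i) = (t - 1) / 2},
      ∀ k i, (e k).val i = (t ^ 2 - 1) / 8 - k.val i * (t - k.val i) / 2 := by
  refine ⟨(distributionEquiv ht).trans (triangularEquiv (Fin 4) _), fun k i => ?_⟩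
  change triangular ((t - 1) / 2 - k.val i) = _
  rw [sq_sub_one_div_eight_of_odd ht, mul_sub_div_two_of_odd ht]
  ring

theorem distributions_equiv_triangular_decompositions (t : ℤ) (ht : Odd t) (ht0 : 0 < t) :
    ∃ e : {k : Fin 4 → ℤ // (∀ i, 0 ≤ k i ∧ k i ≤ (t - 1) / 2) ∧
            (∑ i, k i * (t - k i) / 2) = t * (t - 1) / 2} ≃
          {s : Fin 4 → ℤ // (∀ i, ∃ m : ℤ, 0 ≤ m ∧ s i = m * (m + 1) / 2) ∧
            (∑ i, s i) = (t - 1) / 2},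
      ∀ k i, (e k).val i = (t ^ 2 - 1) / 8 - k.val i * (t - k.val i) / 2 :=
  distributions_equiv_triangular_decompositions_general t ht
end

section
/- Let t be odd and let 0 ≤ k₃ ≤ k₂ ≤ k₁ ≤ k₀ ≤ (t-1)/2 satisfy Σᵢ kᵢ(t-kᵢ)/2 = t(t-1)/2. Then ⌈(t-√(4t-3))/2⌉ ≤ k₃ ≤ ⌊(t+√(4t-3))/2⌋. -/
/-!
Write `t = 2m + 1`. Since `k(t - k)` is even for odd `t`, all the halvings in the hypothesis are
exact, so `Σ kᵢ(t - kᵢ) = t(t - 1)`. Each term is at most `m(m + 1) = (t² - 1)/4`, because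
`t² - 4k(t - k) = (t - 2k)²` is an odd square. Bounding the first three terms this way leaves
`4k₃(t - k₃) ≥ t² - 4t + 3`, i.e. `(t - 2k₃)² ≤ 4t - 3`, which is both bounds at once.
-/

namespace Int

theorem even_mul_sub_self_of_odd {t : ℤ} (ht : Odd t) (k : ℤ) : Even (k * (t - k)) := by
  rcases even_or_odd k with hk | hk
  · exact hk.mul_right _
  · exact (ht.sub_odd hk).mul_left _

theorem four_mul_mul_sub_self_le_sq_sub_one {t : ℤ} (ht : Odd t) (k : ℤ) :
    4 * (k * (t - k)) ≤ t ^ 2 - 1 := by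
  have hodd : Odd (t - 2 * k) := ht.sub_even (even_two_mul k)
  have hsq : 1 ≤ (t - 2 * k) ^ 2 := one_le_sq_iff_one_le_abs _ |>.2 <|
    one_le_abs (fun h ↦ by simp [h] at hodd)
  nlinarith

theorem sum_mul_sub_self_eq_of_odd {t : ℤ} (ht : Odd t) (k₀ k₁ k₂ k₃ : ℤ)
    (hdist : k₀ * (t - k₀) / 2 + k₁ * (t - k₁) / 2 + k₂ * (t - k₂) / 2 + k₃ * (t - k₃) / 2 =
      t * (t - 1) / 2) :
    k₀ * (t - k₀) + k₁ * (t - k₁) + k₂ * (t - k₂) + k₃ * (t - k₃) = t * (t - 1) := by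
  have halve {x : ℤ} (hx : Even x) : x / 2 * 2 = x := ediv_mul_cancel_of_dvd hx.two_dvd
  rw [← halve (even_mul_sub_self_of_odd ht k₀), ← halve (even_mul_sub_self_of_odd ht k₁),
    ← halve (even_mul_sub_self_of_odd ht k₂), ← halve (even_mul_sub_self_of_odd ht k₃),
    ← halve (even_mul_pred_self t), ← hdist]
  ring

theorem sq_sub_two_mul_le_of_sum_mul_sub_self_eq {t : ℤ} (ht : Odd t) {k₀ k₁ k₂ k₃ : ℤ}
    (hsum : k₀ * (t - k₀) + k₁ * (t - k₁) + k₂ * (t - k₂) + k₃ * (t - k₃) = t * (t - 1)) :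
    (t - 2 * k₃) ^ 2 ≤ 4 * t - 3 := by
  linarith [four_mul_mul_sub_self_le_sq_sub_one ht k₀, four_mul_mul_sub_self_le_sq_sub_one ht k₁,
    four_mul_mul_sub_self_le_sq_sub_one ht k₂]

end Int

theorem ceil_le_and_le_floor_of_sq_sub_two_mul_le {a d : ℝ} {k : ℤ} (h : (a - 2 * k) ^ 2 ≤ d) :
    ⌈(a - √d) / 2⌉ ≤ k ∧ k ≤ ⌊(a + √d) / 2⌋ := by
  obtain ⟨hlo, hhi⟩ := abs_le.1 (Real.abs_le_sqrt h)
  exact ⟨Int.ceil_le.2 (by linarith), Int.le_floor.2 (by linarith)⟩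

theorem k3_bounds_general (t : ℤ) (ht : Odd t)
    (k₀ k₁ k₂ k₃ : ℤ)
    (hdist : k₀ * (t - k₀) / 2 + k₁ * (t - k₁) / 2 + k₂ * (t - k₂) / 2 + k₃ * (t - k₃) / 2 =
      t * (t - 1) / 2) :
    ⌈(((t : ℝ) - Real.sqrt (4 * t - 3)) / 2 : ℝ)⌉ ≤ k₃ ∧
    k₃ ≤ ⌊(((t : ℝ) + Real.sqrt (4 * t - 3)) / 2 : ℝ)⌋ := by
  have hsq := Int.sq_sub_two_mul_le_of_sum_mul_sub_self_eq ht
    (Int.sum_mul_sub_self_eq_of_odd ht k₀ k₁ k₂ k₃ hdist)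
  exact ceil_le_and_le_floor_of_sq_sub_two_mul_le (by exact_mod_cast hsq)

theorem k3_bounds (t : ℤ) (ht : Odd t) (ht3 : 3 ≤ t)
    (k₀ k₁ k₂ k₃ : ℤ) (h0 : 0 ≤ k₃) (h32 : k₃ ≤ k₂) (h21 : k₂ ≤ k₁) (h10 : k₁ ≤ k₀)
    (hub : k₀ ≤ (t - 1) / 2)
    (hdist : k₀ * (t - k₀) / 2 + k₁ * (t - k₁) / 2 + k₂ * (t - k₂) / 2 + k₃ * (t - k₃) / 2 =
      t * (t - 1) / 2) :
    ⌈(((t : ℝ) - Real.sqrt (4 * t - 3)) / 2 : ℝ)⌉ ≤ k₃ ∧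
    k₃ ≤ ⌊(((t : ℝ) + Real.sqrt (4 * t - 3)) / 2 : ℝ)⌋ :=
  k3_bounds_general t ht k₀ k₁ k₂ k₃ hdist
end

section
/- Let t be odd and let 0 ≤ k₀,k₁,k₂,k₃ ≤ (t-1)/2 satisfy Σᵢ kᵢ(t-kᵢ)/2 = t(t-1)/2, and set n = k₀+k₁+k₂+k₃. Then ⌈2(t-√t)⌉ ≤ n ≤ ⌊2(t+√t)⌋. -/
/-!
Write `n = k₀ + k₁ + k₂ + k₃`. Since `t` is odd, every `kᵢ (t - kᵢ)` is even, so the halved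
identity is the exact identity `∑ kᵢ (t - kᵢ) = t (t - 1)`, i.e. `t n - ∑ kᵢ² = t (t - 1)`.
With `∑ kᵢ² ≥ n² / 4` (Cauchy–Schwarz) this gives `(n - 2t)² ≤ 4t`, i.e. `|n - 2t| ≤ 2√t`.
-/

lemma Int.even_mul_sub_self_of_odd_s12 {t : ℤ} (ht : Odd t) (k : ℤ) : Even (k * (t - k)) := by
  rcases Int.even_or_odd k with hk | hk
  · exact hk.mul_right _
  · exact (ht.sub_odd hk).mul_left _

lemma Int.sum_mul_sub_self_eq_of_half_sum_eq {t : ℤ} (ht : Odd t) (k₀ k₁ k₂ k₃ : ℤ)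
    (hdist : k₀ * (t - k₀) / 2 + k₁ * (t - k₁) / 2 + k₂ * (t - k₂) / 2 + k₃ * (t - k₃) / 2 =
      t * (t - 1) / 2) :
    k₀ * (t - k₀) + k₁ * (t - k₁) + k₂ * (t - k₂) + k₃ * (t - k₃) = t * (t - 1) := by
  have hk (k : ℤ) := Int.two_mul_ediv_two_of_even (Int.even_mul_sub_self_of_odd_s12 ht k)
  rw [← hk k₀, ← hk k₁, ← hk k₂, ← hk k₃, ← Int.two_mul_ediv_two_of_even (Int.even_mul_pred_self t)]
  linear_combination 2 * hdist

lemma sq_sub_two_mul_le_of_sum_mul_sub_self_eq {R : Type*} [CommRing R] [LinearOrder R]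
    [IsStrictOrderedRing R] {t k₀ k₁ k₂ k₃ : R}
    (h : k₀ * (t - k₀) + k₁ * (t - k₁) + k₂ * (t - k₂) + k₃ * (t - k₃) = t * (t - 1)) :
    (k₀ + k₁ + k₂ + k₃ - 2 * t) ^ 2 ≤ 4 * t := by
  nlinarith [sq_nonneg (k₀ - k₁), sq_nonneg (k₀ - k₂), sq_nonneg (k₀ - k₃),
    sq_nonneg (k₁ - k₂), sq_nonneg (k₁ - k₃), sq_nonneg (k₂ - k₃)]

lemma Real.abs_sub_two_mul_le_two_mul_sqrt {x t : ℝ} (h : (x - 2 * t) ^ 2 ≤ 4 * t) :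
    |x - 2 * t| ≤ 2 * √t := by
  have ht : 0 ≤ t := by nlinarith [sq_nonneg (x - 2 * t)]
  calc |x - 2 * t| ≤ √(4 * t) := Real.abs_le_sqrt h
    _ = 2 * √t := by rw [Real.sqrt_mul zero_le_four, show (4 : ℝ) = 2 * 2 by norm_num,
        Real.sqrt_mul_self zero_le_two]

theorem total_coboundaries_bounds_general (t : ℤ) (ht : Odd t)
    (k₀ k₁ k₂ k₃ : ℤ)
    (hdist : k₀ * (t - k₀) / 2 + k₁ * (t - k₁) / 2 + k₂ * (t - k₂) / 2 + k₃ * (t - k₃) / 2 =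
      t * (t - 1) / 2)
    (n : ℤ) (hn : n = k₀ + k₁ + k₂ + k₃) :
    ⌈(2 * ((t : ℝ) - Real.sqrt t) : ℝ)⌉ ≤ n ∧ n ≤ ⌊(2 * ((t : ℝ) + Real.sqrt t) : ℝ)⌋ := by
  have hsq : (n - 2 * t) ^ 2 ≤ 4 * t :=
    hn ▸ sq_sub_two_mul_le_of_sum_mul_sub_self_eq
      (Int.sum_mul_sub_self_eq_of_half_sum_eq ht k₀ k₁ k₂ k₃ hdist)
  have habs := abs_le.mp <| Real.abs_sub_two_mul_le_two_mul_sqrt (x := n) (t := t) <| by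
    exact_mod_cast hsq
  constructor
  · rw [Int.ceil_le]; linarith [habs.1]
  · rw [Int.le_floor]; linarith [habs.2]

theorem total_coboundaries_bounds (t : ℤ) (ht : Odd t) (ht3 : 3 ≤ t)
    (k₀ k₁ k₂ k₃ : ℤ)
    (h0 : 0 ≤ k₀ ∧ k₀ ≤ (t - 1) / 2) (h1 : 0 ≤ k₁ ∧ k₁ ≤ (t - 1) / 2)
    (h2 : 0 ≤ k₂ ∧ k₂ ≤ (t - 1) / 2) (h3 : 0 ≤ k₃ ∧ k₃ ≤ (t - 1) / 2)
    (hdist : k₀ * (t - k₀) / 2 + k₁ * (t - k₁) / 2 + k₂ * (t - k₂) / 2 + k₃ * (t - k₃) / 2 =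
      t * (t - 1) / 2)
    (n : ℤ) (hn : n = k₀ + k₁ + k₂ + k₃) :
    ⌈(2 * ((t : ℝ) - Real.sqrt t) : ℝ)⌉ ≤ n ∧ n ≤ ⌊(2 * ((t : ℝ) + Real.sqrt t) : ℝ)⌋ :=
  total_coboundaries_bounds_general t ht k₀ k₁ k₂ k₃ hdist n hn
end

section
/- Let G be a finite group of order 4t with elements ordered g₁,...,g_{4t}, and f : G × G → {1,-1} a 2-cocycle (f(a,b)f(ab,c)f(a,bc)f(b,c) = 1 for all a,b,c, with f(1,1)=1). If the cocyclic matrix M_f = (f(gᵢ,gⱼ)) has the property that every row other than the first sums to zero, then M_f is a Hadamard matrix. -/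
/-! Rows `a` and `b` of a `±1`-cocyclic matrix have inner product `f(c, b) · ∑ₓ f(c, x)` with
`c = a b⁻¹`: the cocycle identity for `(c, b, x)` turns `f(cb, x) f(b, x)` into `f(c, b) f(c, bx)`,
and `x ↦ bx` permutes `G`. Hence distinct rows are orthogonal as soon as every row `c ≠ 1` sums to
zero, while each row has squared norm `|G|`. -/

open Matrix

def cocyclicMatrix {G R : Type*} (f : G → G → R) : Matrix G G R :=
  Matrix.of f

section Cocycle

variable {G R : Type*} [CommRing R] {f : G → G → R}

theorem cocycle_mul_left_mul [Group G] (hsq : ∀ a b, f a b * f a b = 1)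
    (hcocycle : ∀ a b c, f a b * f (a * b) c * f a (b * c) * f b c = 1) (c b x : G) :
    f (c * b) x * f b x = f c b * f c (b * x) :=
  calc f (c * b) x * f b x
      = (f c b * f c b) * (f c (b * x) * f c (b * x)) * (f (c * b) x * f b x) := by
        rw [hsq, hsq, one_mul, one_mul]
    _ = f c b * f c (b * x) * (f c b * f (c * b) x * f c (b * x) * f b x) := by ring
    _ = f c b * f c (b * x) := by rw [hcocycle, mul_one]

variable [Fintype G]

theorem cocyclicMatrix_mul_transpose_apply_self (hsq : ∀ a b, f a b * f a b = 1) (a : G) :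
    (cocyclicMatrix f * (cocyclicMatrix f)ᵀ) a a = Fintype.card G := by
  simp [cocyclicMatrix, mul_apply, hsq]

variable [Group G]

theorem cocyclicMatrix_mul_transpose_apply (hsq : ∀ a b, f a b * f a b = 1)
    (hcocycle : ∀ a b c, f a b * f (a * b) c * f a (b * c) * f b c = 1) (a b : G) :
    (cocyclicMatrix f * (cocyclicMatrix f)ᵀ) a b = f (a * b⁻¹) b * ∑ x, f (a * b⁻¹) x := by
  calc (cocyclicMatrix f * (cocyclicMatrix f)ᵀ) a b
      = ∑ x, f a x * f b x := rfl
    _ = ∑ x, f (a * b⁻¹) b * f (a * b⁻¹) (b * x) := by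
        refine Finset.sum_congr rfl fun x _ => ?_
        simpa using cocycle_mul_left_mul hsq hcocycle (a * b⁻¹) b x
    _ = f (a * b⁻¹) b * ∑ x, f (a * b⁻¹) x := by
        rw [← Finset.mul_sum, ← Equiv.sum_comp (Equiv.mulLeft b) (f (a * b⁻¹))]
        rfl

theorem cocyclicMatrix_mul_transpose [DecidableEq G] (hsq : ∀ a b, f a b * f a b = 1)
    (hcocycle : ∀ a b c, f a b * f (a * b) c * f a (b * c) * f b c = 1)
    (hrows : ∀ c ≠ 1, ∑ x, f c x = 0) :
    cocyclicMatrix f * (cocyclicMatrix f)ᵀ = (Fintype.card G : R) • 1 := by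
  ext a b
  obtain rfl | hab := eq_or_ne a b
  · simp [cocyclicMatrix_mul_transpose_apply_self hsq, one_apply]
  · rw [cocyclicMatrix_mul_transpose_apply hsq hcocycle,
      hrows _ (mul_inv_eq_one.not.mpr hab), mul_zero]
    simp [one_apply, hab]

end Cocycle

theorem cocyclic_hadamard_test (t : ℕ) (ht : 0 < t) (G : Type*) [Group G] [Fintype G]
    (hcard : Fintype.card G = 4 * t) (g : Fin (4 * t) ≃ G) (hg0 : g ⟨0, by omega⟩ = 1)
    (f : G → G → ℤ) (hval : ∀ a b, f a b = 1 ∨ f a b = -1)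
    (hcocycle : ∀ a b c, f a b * f (a * b) c * f a (b * c) * f b c = 1)
    (M : Matrix (Fin (4 * t)) (Fin (4 * t)) ℤ) (hM : ∀ i j, M i j = f (g i) (g j))
    (hrows : ∀ i : Fin (4 * t), i ≠ ⟨0, by omega⟩ → ∑ j, M i j = 0) :
    M * M.transpose = (4 * t : ℤ) • (1 : Matrix (Fin (4 * t)) (Fin (4 * t)) ℤ) := by
  classical
  have hsq : ∀ a b, f a b * f a b = 1 := fun a b => by
    rcases hval a b with h | h <;> simp [h]
  have hMf : M = (cocyclicMatrix f).submatrix g g := Matrix.ext hM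
  have hrowsG : ∀ c ≠ 1, ∑ x, f c x = 0 := by
    intro c hc
    have hidx : g.symm c ≠ ⟨0, by omega⟩ := fun h => hc (by rw [← g.apply_symm_apply c, h, hg0])
    simpa [hM, g.sum_comp (f c)] using hrows _ hidx
  rw [hMf, transpose_submatrix, submatrix_mul_equiv,
    cocyclicMatrix_mul_transpose hsq hcocycle hrowsG, hcard]
  ext i j
  simp only [submatrix_apply, Matrix.smul_apply, one_apply, g.injective.eq_iff]
  push_cast
  rfl
end
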